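/- Let A be a real I×R matrix and B a real K×R matrix, each of full column rank R, and suppose the Khatri-Rao product A⊙B (an IK×R matrix) also has full column rank R. Then the coherence satisfies μ(A⊙B) ≤ μ(A)·μ(B). -/
import Mathlib


open Matrix

/-- The Khatri-Rao product (matching columnwise Kronecker product) of
`A : I × R` and `B : K × R`, an `(I*K) × R` matrix. -/
def khatriRao {I K R : Type*} (A : Matrix I R ℝ) (B : Matrix K R ℝ) :
    Matrix (I × K) R ℝ :=
  Matrix.of fun p r => A p.1 r * B p.2 r

/-- Leverage score of row `i` of a matrix `A`: the `i`-th diagonal entry of the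
orthogonal projection matrix `A (Aᵀ A)⁻¹ Aᵀ`. -/
noncomputable def leverage {n d : Type*} [Fintype n] [Fintype d] [DecidableEq d]
    (A : Matrix n d ℝ) (i : n) : ℝ :=
  (A * (Aᵀ * A)⁻¹ * Aᵀ) i i

/-- Coherence of a matrix: the maximum leverage score over all rows. -/
noncomputable def coherence {n d : Type*} [Fintype n] [Fintype d] [DecidableEq d]
    (A : Matrix n d ℝ) : ℝ :=
  ⨆ i, leverage A i

section aux

open Kronecker

variable {n d : Type*} [Fintype n] [Fintype d] [DecidableEq d]

/-- A square real matrix of full rank has unit determinant. -/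
lemma aux_isUnit_det_of_rank {R : ℕ} (G : Matrix (Fin R) (Fin R) ℝ)
    (h : G.rank = R) : IsUnit G.det := by
  rw [← Matrix.isUnit_iff_isUnit_det, ← Matrix.mulVec_surjective_iff_isUnit]
  have hrange : LinearMap.range G.mulVecLin = ⊤ := by
    apply Submodule.eq_top_of_finrank_eq
    rw [show Module.finrank ℝ (Fin R → ℝ) = R by simp]
    exact h
  intro y
  have : y ∈ LinearMap.range G.mulVecLin := hrange ▸ Submodule.mem_top
  obtain ⟨x, hx⟩ := this
  exact ⟨x, hx⟩

/-- The projection matrix of `A`. -/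
noncomputable def proj (A : Matrix n d ℝ) : Matrix n n ℝ :=
  A * (Aᵀ * A)⁻¹ * Aᵀ

lemma proj_transpose (A : Matrix n d ℝ) : (proj A)ᵀ = proj A := by
  unfold proj
  simp only [Matrix.transpose_mul, Matrix.transpose_nonsing_inv, Matrix.transpose_transpose,
    Matrix.mul_assoc]

lemma proj_mul_self (A : Matrix n d ℝ) (h : IsUnit (Aᵀ * A).det) :
    proj A * A = A := by
  have h2 : A * (Aᵀ * A)⁻¹ * (Aᵀ * A) = A := Matrix.nonsing_inv_mul_cancel_right _ _ h
  calc proj A * A = A * (Aᵀ * A)⁻¹ * (Aᵀ * A) := by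
        unfold proj; simp only [Matrix.mul_assoc]
    _ = A := h2

lemma proj_idem (A : Matrix n d ℝ) (h : IsUnit (Aᵀ * A).det) :
    proj A * proj A = proj A := by
  have : proj A * A = A := proj_mul_self A h
  unfold proj at this ⊢
  calc A * (Aᵀ * A)⁻¹ * Aᵀ * (A * (Aᵀ * A)⁻¹ * Aᵀ)
      = (A * (Aᵀ * A)⁻¹ * Aᵀ * A) * ((Aᵀ * A)⁻¹ * Aᵀ) := by
        simp only [Matrix.mul_assoc]
    _ = A * ((Aᵀ * A)⁻¹ * Aᵀ) := by rw [this]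
    _ = A * (Aᵀ * A)⁻¹ * Aᵀ := (Matrix.mul_assoc _ _ _).symm

/-- Diagonal entries of a symmetric idempotent matrix are nonnegative. -/
lemma diag_nonneg_of_symm_idem (P : Matrix n n ℝ) (hs : Pᵀ = P)
    (hi : P * P = P) (i : n) : 0 ≤ P i i := by
  have : P i i = ∑ j, P i j * P i j := by
    conv_lhs => rw [← hi]
    rw [Matrix.mul_apply]
    refine Finset.sum_congr rfl fun j _ => ?_
    congr 1
    conv_lhs => rw [← hs]
    rw [Matrix.transpose_apply]
  rw [this]
  exact Finset.sum_nonneg fun j _ => mul_self_nonneg _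

/-- If `P, Q` are symmetric idempotent and `Q * P = P`, then diagonally `P ≤ Q`. -/
lemma diag_le_of_symm_idem (P Q : Matrix n n ℝ) (hPs : Pᵀ = P) (hQs : Qᵀ = Q)
    (hPi : P * P = P) (hQi : Q * Q = Q) (hQP : Q * P = P) (i : n) :
    P i i ≤ Q i i := by
  have hPQ : P * Q = P := by
    have := congrArg Matrix.transpose hQP
    rwa [Matrix.transpose_mul, hPs, hQs] at this
  have hD : (Q - P) * (Q - P) = Q - P := by
    rw [Matrix.sub_mul, Matrix.mul_sub, Matrix.mul_sub, hQi, hQP, hPQ, hPi]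
    abel
  have hDs : (Q - P)ᵀ = Q - P := by rw [Matrix.transpose_sub, hPs, hQs]
  have := diag_nonneg_of_symm_idem (Q - P) hDs hD i
  simpa [Matrix.sub_apply] using this

lemma kronecker_mul_khatriRao {I K R : Type*} [Fintype I] [Fintype K]
    (X : Matrix I I ℝ) (Y : Matrix K K ℝ) (A : Matrix I R ℝ) (B : Matrix K R ℝ) :
    (X ⊗ₖ Y) * khatriRao A B = khatriRao (X * A) (Y * B) := by
  ext ⟨i, k⟩ r
  simp only [Matrix.mul_apply, khatriRao, Matrix.of_apply, Matrix.kroneckerMap_apply,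
    Fintype.sum_prod_type]
  rw [Finset.sum_mul_sum]
  refine Finset.sum_congr rfl fun j _ => ?_
  refine Finset.sum_congr rfl fun l _ => ?_
  ring

end aux

lemma leverage_eq_proj_diag {n d : Type*} [Fintype n] [Fintype d] [DecidableEq d]
    (A : Matrix n d ℝ) (i : n) : leverage A i = proj A i i := rfl

lemma leverage_nonneg {n d : Type*} [Fintype n] [Fintype d] [DecidableEq d]
    (A : Matrix n d ℝ) (i : n) : 0 ≤ leverage A i := by
  by_cases h : IsUnit (Aᵀ * A).det
  · exact diag_nonneg_of_symm_idem (proj A) (proj_transpose A) (proj_idem A h) i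
  · rw [leverage, Matrix.nonsing_inv_apply_not_isUnit _ h]
    simp

lemma coherence_nonneg {n d : Type*} [Fintype n] [Fintype d] [DecidableEq d]
    (A : Matrix n d ℝ) : 0 ≤ coherence A := by
  rcases isEmpty_or_nonempty n with h | h
  · rw [coherence, Real.iSup_of_isEmpty]
  · exact le_trans (leverage_nonneg A (Classical.arbitrary n))
      (le_ciSup (Set.Finite.bddAbove (Set.finite_range _)) _)

open Kronecker in
/-- Pointwise bound on leverage scores of a Khatri-Rao product. -/
lemma leverage_khatriRao_le {I K R : ℕ}
    (A : Matrix (Fin I) (Fin R) ℝ) (B : Matrix (Fin K) (Fin R) ℝ)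
    (hGA : IsUnit (Aᵀ * A).det) (hGB : IsUnit (Bᵀ * B).det)
    (hGM : IsUnit ((khatriRao A B)ᵀ * khatriRao A B).det) (i : Fin I) (k : Fin K) :
    leverage (khatriRao A B) (i, k) ≤ leverage A i * leverage B k := by
  set M := khatriRao A B with hM
  set P := proj M with hP
  set Q := proj A ⊗ₖ proj B with hQ
  have hQs : Qᵀ = Q := by
    rw [hQ, ← Matrix.kroneckerMap_transpose, proj_transpose, proj_transpose]
  have hQi : Q * Q = Q := by
    rw [hQ, ← Matrix.mul_kronecker_mul, proj_idem A hGA, proj_idem B hGB]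
  have hQM : Q * M = M := by
    rw [hQ, hM, kronecker_mul_khatriRao, proj_mul_self A hGA, proj_mul_self B hGB]
  have hQP : Q * P = P := by
    rw [hP]
    unfold proj
    rw [← Matrix.mul_assoc, ← Matrix.mul_assoc, hQM]
  have key := diag_le_of_symm_idem P Q (proj_transpose M) hQs (proj_idem M hGM) hQi hQP (i, k)
  calc leverage M (i, k) = P (i, k) (i, k) := rfl
    _ ≤ Q (i, k) (i, k) := key
    _ = leverage A i * leverage B k := by
      rw [hQ, Matrix.kroneckerMap_apply]; rfl

/-- If `A` and `B` each have full column rank `R`, and their Khatri-Rao product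
also has full column rank `R`, then `μ(A ⊙ B) ≤ μ(A) * μ(B)`. -/
theorem coherence_khatriRao_le {I K R : ℕ}
    (A : Matrix (Fin I) (Fin R) ℝ) (B : Matrix (Fin K) (Fin R) ℝ)
    (hA : A.rank = R) (hB : B.rank = R) (hAB : (khatriRao A B).rank = R) :
    coherence (khatriRao A B) ≤ coherence A * coherence B := by
  have hGA : IsUnit (Aᵀ * A).det :=
    aux_isUnit_det_of_rank _ (by rw [Matrix.rank_transpose_mul_self, hA])
  have hGB : IsUnit (Bᵀ * B).det :=
    aux_isUnit_det_of_rank _ (by rw [Matrix.rank_transpose_mul_self, hB])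
  have hGM : IsUnit ((khatriRao A B)ᵀ * khatriRao A B).det :=
    aux_isUnit_det_of_rank _ (by rw [Matrix.rank_transpose_mul_self, hAB])
  rcases isEmpty_or_nonempty (Fin I × Fin K) with h | h
  · rw [coherence, Real.iSup_of_isEmpty]
    exact mul_nonneg (coherence_nonneg A) (coherence_nonneg B)
  · rw [coherence]
    refine ciSup_le fun p => ?_
    obtain ⟨i, k⟩ := p
    refine le_trans (leverage_khatriRao_le A B hGA hGB hGM i k) ?_
    have hI : Nonempty (Fin I) := ⟨(Classical.arbitrary (Fin I × Fin K)).1⟩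
    have hK : Nonempty (Fin K) := ⟨(Classical.arbitrary (Fin I × Fin K)).2⟩
    have h1 : leverage A i ≤ coherence A :=
      le_ciSup (Set.Finite.bddAbove (Set.finite_range _)) i
    have h2 : leverage B k ≤ coherence B :=
      le_ciSup (Set.Finite.bddAbove (Set.finite_range _)) k
    exact mul_le_mul h1 h2 (leverage_nonneg B k) (le_trans (leverage_nonneg A i) h1)
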